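/- Let W ⊆ ℝ be a set that is well-ordered by the usual order and contains none of its limit points, and let g₀ : Wⁿ → ℝ be a nondecreasing function (monotone in each coordinate) that is bounded on precompact sets. Then there exists a continuous nondecreasing function g : ℝⁿ → ℝ whose restriction to Wⁿ equals g₀. -/

import Mathlib

/-!
The step function `G y = sup {g₀ v | v ∈ Wⁿ, v ≤ y}` is a monotone extension of `g₀`, and since
`W` is well-ordered it is continuous at every `y` none of whose coordinates lies in `W`. We smooth
it by averaging `G` along the paths `t ↦ x + t ρ(x)`, `t ∈ [0, 1]`, where `ρ ≥ 0` is `1`-Lipschitz,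
positive on `W` (whose points are isolated) and less than the gap from a point of `W` to the next
one. The average is monotone; from a point of `Wⁿ` the whole path stays below the next points of
`W`, where `G = g₀`; and `W` is countable, so for almost every `t` the path from `x` avoids the
discontinuities of `G`, and dominated convergence gives continuity.
-/

open Set Filter Topology MeasureTheory

theorem Set.IsWF.exists_gt_forall_lt_le {α : Type*} [LinearOrder α] [NoMaxOrder α] {W : Set α}
    (hW : W.IsWF) (y : α) : ∃ b, y < b ∧ ∀ u ∈ W, u < b → u ≤ y := by
  by_cases h : (W ∩ Ioi y).Nonempty
  · have hWy : (W ∩ Ioi y).IsWF := hW.mono inter_subset_left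
    refine ⟨hWy.min h, (hWy.min_mem h).2, fun u hu hub => not_lt.1 fun hyu => ?_⟩
    exact (hWy.min_le h ⟨hu, hyu⟩).not_gt hub
  · obtain ⟨b, hb⟩ := exists_gt y
    exact ⟨b, hb, fun u hu _ => not_lt.1 fun hyu => h ⟨u, hu, hyu⟩⟩

theorem Set.IsWF.isLeast_csInf {α : Type*} [ConditionallyCompleteLinearOrder α] {W : Set α}
    (hW : W.IsWF) (hn : W.Nonempty) : IsLeast W (sInf W) := by
  have h : IsLeast W (hW.min hn) := ⟨hW.min_mem hn, fun _ => hW.min_le hn⟩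
  rwa [h.csInf_eq]

theorem Set.IsWF.isLeast_pi_csInf {α ι : Type*} [ConditionallyCompleteLinearOrder α] {W : Set α}
    (hW : W.IsWF) (hP : (univ.pi fun _ : ι => W).Nonempty) :
    IsLeast (univ.pi fun _ : ι => W) fun _ => sInf W := by
  obtain ⟨v, hv⟩ := hP
  have hmin : ∀ i, IsLeast W (sInf W) := fun i => hW.isLeast_csInf ⟨v i, hv i (mem_univ i)⟩
  exact ⟨fun i _ => (hmin i).1, fun x hx i => (hmin i).2 (hx i (mem_univ i))⟩

theorem Set.Countable.of_forall_notMem_closure_diff {X : Type*} [TopologicalSpace X]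
    [HereditarilyLindelofSpace X] {W : Set X} (h : ∀ w ∈ W, w ∉ closure (W \ {w})) :
    W.Countable := by
  have : DiscreteTopology W := discreteTopology_of_noAccPts fun w hw hacc =>
    h w hw (mem_closure_iff_clusterPt.2 (accPt_principal_iff_clusterPt.1 hacc))
  exact (HereditarilyLindelofSpace.isLindelof W).countable this

/-- `c` is meant to be a lower bound of `f` on `s`; it keeps the supremum off `sSup ∅ = 0`. -/
noncomputable def supBelow {α : Type*} [Preorder α] (s : Set α) (f : α → ℝ) (c : ℝ) (y : α) : ℝ :=
  sSup (insert c (f '' (s ∩ Iic y)))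

section supBelow

variable {α : Type*} [Preorder α] {s : Set α} {f : α → ℝ} {c : ℝ} {v y y' : α}

theorem const_le_supBelow (hbdd : BddAbove (f '' (s ∩ Iic y))) : c ≤ supBelow s f c y :=
  le_csSup (hbdd.insert c) (mem_insert _ _)

theorem le_supBelow (hbdd : BddAbove (f '' (s ∩ Iic y))) (hv : v ∈ s ∩ Iic y) :
    f v ≤ supBelow s f c y :=
  le_csSup (hbdd.insert c) (mem_insert_of_mem _ (mem_image_of_mem f hv))

theorem supBelow_le_supBelow (hbdd : BddAbove (f '' (s ∩ Iic y'))) (h : s ∩ Iic y ⊆ s ∩ Iic y') :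
    supBelow s f c y ≤ supBelow s f c y' :=
  csSup_le_csSup (hbdd.insert c) (insert_nonempty _ _) (insert_subset_insert (image_mono h))

theorem monotone_supBelow (hbdd : ∀ y, BddAbove (f '' (s ∩ Iic y))) :
    Monotone (supBelow s f c) :=
  fun _ y' h => supBelow_le_supBelow (hbdd y') fun _ hv => ⟨hv.1, hv.2.trans h⟩

theorem supBelow_eq (hf : MonotoneOn f s) (hc : ∀ v ∈ s, c ≤ f v) {w : α}
    (hw : IsGreatest (s ∩ Iic y) w) : supBelow s f c y = f w := by
  refine IsGreatest.csSup_eq ⟨mem_insert_of_mem _ (mem_image_of_mem f hw.1), ?_⟩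
  rintro _ (rfl | ⟨v, hv, rfl⟩)
  · exact hc w hw.1.1
  · exact hf hv.1 hw.1.1 (hw.2 hv)

end supBelow

section pi

variable {ι : Type*} [Fintype ι] {W : Set ℝ} {f : (ι → ℝ) → ℝ} {c : ℝ}

theorem bddAbove_image_pi_inter_Iic (hW : W.IsWF)
    (hbdd : ∀ B : Set (ι → ℝ), Bornology.IsBounded B →
      ∃ C : ℝ, ∀ x ∈ B, (∀ i, x i ∈ W) → |f x| ≤ C)
    (y : ι → ℝ) : BddAbove (f '' (univ.pi (fun _ => W) ∩ Iic y)) := by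
  obtain ⟨C, hC⟩ := hbdd (Icc (fun _ => sInf W) y) (Metric.isBounded_Icc _ _)
  refine ⟨C, ?_⟩
  rintro _ ⟨v, ⟨hv, hvy⟩, rfl⟩
  exact (le_abs_self _).trans
    (hC v ⟨(hW.isLeast_pi_csInf ⟨v, hv⟩).2 hv, hvy⟩ fun i => hv i (mem_univ i))

theorem continuousAt_supBelow_pi (hW : W.IsWF)
    (hbdd : ∀ y, BddAbove (f '' (univ.pi (fun _ => W) ∩ Iic y))) {y : ι → ℝ}
    (hy : ∀ i, y i ∉ W) : ContinuousAt (supBelow (univ.pi fun _ => W) f c) y := by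
  refine tendsto_order.2 ⟨fun b hb => ?_, fun b hb => ?_⟩
  · obtain ⟨r, hr, hbr⟩ := exists_lt_of_lt_csSup (insert_nonempty _ _) hb
    rcases hr with rfl | ⟨v, ⟨hv, hvy⟩, rfl⟩
    · exact Eventually.of_forall fun y' => hbr.trans_le (const_le_supBelow (hbdd y'))
    · have hvy' : ∀ i, v i < y i :=
        fun i => (hvy i).lt_of_ne fun h => hy i (h ▸ hv i (mem_univ i))
      filter_upwards [pi_Ici_mem_nhds hvy'] with y' hy'
      exact hbr.trans_le (le_supBelow (hbdd y') ⟨hv, hy'⟩)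
  · choose e hye he using fun i => hW.exists_gt_forall_lt_le (y i)
    have hnear : ∀ᶠ y' in 𝓝 y, ∀ i, y' i < e i := eventually_all.2 fun i =>
      ((continuous_apply i).tendsto y).eventually (eventually_lt_nhds (hye i))
    filter_upwards [hnear] with y' hy'
    refine (supBelow_le_supBelow (hbdd y) fun v hv => ⟨hv.1, fun i => ?_⟩).trans_lt hb
    exact he i _ (hv.1 i (mem_univ i)) ((hv.2 i).trans_lt (hy' i))

end pi

/-- At `w ∈ W` this is half the distance from `w` to the rest of `W`; measuring it from `(x, x)`
to `W.offDiag` makes it `1`-Lipschitz in `x`. The extra point `(0, 1)` keeps the set nonempty, so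
that the radius is positive on `W` even when `W` has fewer than two points. -/
noncomputable def sepRadius (W : Set ℝ) (x : ℝ) : ℝ :=
  Metric.infDist (x, x) (insert (0, 1) W.offDiag) / 2

section sepRadius

variable {W : Set ℝ}

theorem sepRadius_nonneg (x : ℝ) : 0 ≤ sepRadius W x :=
  div_nonneg Metric.infDist_nonneg zero_le_two

theorem lipschitzWith_sepRadius : LipschitzWith 1 (sepRadius W) := by
  refine LipschitzWith.of_le_add fun x y => ?_
  have h := Metric.infDist_le_infDist_add_dist (x := (x, x)) (y := (y, y))
    (s := insert (0, 1) W.offDiag)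
  rw [Prod.dist_eq, max_self] at h
  have := dist_nonneg (x := x) (y := y)
  unfold sepRadius
  linarith

theorem sepRadius_lt_abs_sub {w u : ℝ} (hw : w ∈ W) (hu : u ∈ W) (hne : u ≠ w) :
    sepRadius W w < |u - w| := by
  have h := Metric.infDist_le_dist_of_mem (x := (w, w))
    (mem_insert_of_mem (0, 1) (show (w, u) ∈ W.offDiag from ⟨hw, hu, hne.symm⟩))
  rw [Prod.dist_eq, dist_self, Real.dist_eq, abs_sub_comm,
    max_eq_right (abs_nonneg _)] at h
  have := abs_pos.2 (sub_ne_zero.2 hne)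
  unfold sepRadius
  linarith

theorem sepRadius_pos {w : ℝ} (hw : w ∉ closure (W \ {w})) : 0 < sepRadius W w := by
  refine div_pos ((Metric.infDist_pos_iff_notMem_closure (insert_nonempty _ _)).1 ?_) two_pos
  rw [insert_eq, closure_union, closure_singleton]
  rintro (h | h)
  · obtain ⟨h0, h1⟩ := Prod.ext_iff.1 h
    exact zero_ne_one (h0.symm.trans h1)
  · refine hw (Metric.mem_closure_iff.2 fun ε hε => ?_)
    obtain ⟨⟨a, b⟩, ⟨ha, hb, hab⟩, hd⟩ := Metric.mem_closure_iff.1 h ε hε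
    rw [Prod.dist_eq, max_lt_iff] at hd
    by_cases haw : a = w
    · exact ⟨b, ⟨hb, fun hbw => hab (haw.trans hbw.symm)⟩, hd.2⟩
    · exact ⟨a, ⟨ha, haw⟩, hd.1⟩

theorem le_of_le_add_mul_sepRadius {w u t : ℝ} (hw : w ∈ W) (hu : u ∈ W) (ht : t ≤ 1)
    (h : u ≤ w + t * sepRadius W w) : u ≤ w := by
  by_contra hlt
  have hwu := sepRadius_lt_abs_sub hw hu (ne_of_gt (not_le.1 hlt))
  rw [abs_of_pos (sub_pos.2 (not_le.1 hlt))] at hwu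
  nlinarith [sepRadius_nonneg (W := W) w]

end sepRadius

def slide {ι : Type*} (ρ : ℝ → ℝ) (t : ℝ) (x : ι → ℝ) : ι → ℝ := fun i => x i + t * ρ (x i)

noncomputable def slideAverage {ι : Type*} (G : (ι → ℝ) → ℝ) (ρ : ℝ → ℝ) (x : ι → ℝ) : ℝ :=
  ∫ t in (0 : ℝ)..1, G (slide ρ t x)

section slide

variable {ι : Type*} {ρ : ℝ → ℝ} {G : (ι → ℝ) → ℝ}

theorem slide_le_slide (hρ : LipschitzWith 1 ρ) (hρ0 : ∀ a, 0 ≤ ρ a) {t t' : ℝ} {x x' : ι → ℝ}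
    (ht : 0 ≤ t) (htt' : t ≤ t') (ht' : t' ≤ 1) (hxx' : x ≤ x') : slide ρ t x ≤ slide ρ t' x' := by
  intro i
  have hL : ρ (x i) - ρ (x' i) ≤ x' i - x i := by
    have h := hρ.dist_le_mul (x i) (x' i)
    rw [Real.dist_eq, Real.dist_eq, NNReal.coe_one, one_mul,
      abs_of_nonpos (sub_nonpos.2 (hxx' i))] at h
    linarith [le_abs_self (ρ (x i) - ρ (x' i))]
  have hshift : t * (ρ (x i) - ρ (x' i)) ≤ x' i - x i := by
    rcases le_total (ρ (x i) - ρ (x' i)) 0 with h | h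
    · nlinarith [hxx' i]
    · nlinarith
  have := mul_nonneg (sub_nonneg.2 htt') (hρ0 (x' i))
  simp only [slide]
  linarith

theorem monotone_slide_left (hρ0 : ∀ a, 0 ≤ ρ a) (x : ι → ℝ) :
    Monotone fun t => slide ρ t x :=
  fun _ _ h i => add_le_add_right (mul_le_mul_of_nonneg_right h (hρ0 (x i))) _

theorem continuous_slide (hρ : Continuous ρ) (t : ℝ) :
    Continuous (slide ρ t : (ι → ℝ) → ι → ℝ) :=
  continuous_pi fun i =>
    (continuous_apply i).add (continuous_const.mul (hρ.comp (continuous_apply i)))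

theorem slideAverage_eq {x : ι → ℝ} {a : ℝ} (h : ∀ t ∈ Icc (0 : ℝ) 1, G (slide ρ t x) = a) :
    slideAverage G ρ x = a := by
  rw [slideAverage, intervalIntegral.integral_congr (g := fun _ => a)
    fun t ht => h t (by rwa [uIcc_of_le zero_le_one] at ht)]
  simp

theorem monotone_slideAverage (hG : Monotone G) (hρ : LipschitzWith 1 ρ) (hρ0 : ∀ a, 0 ≤ ρ a) :
    Monotone (slideAverage G ρ) := by
  intro x x' hxx'
  have hint : ∀ z, IntervalIntegrable (fun t => G (slide ρ t z)) volume 0 1 :=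
    fun z => (hG.comp (monotone_slide_left hρ0 z)).intervalIntegrable
  exact intervalIntegral.integral_mono_on zero_le_one (hint x) (hint x')
    fun t ht => hG (slide_le_slide hρ hρ0 ht.1 le_rfl ht.2 hxx')

theorem continuous_slideAverage [Fintype ι] (hG : Monotone G) (hρ : LipschitzWith 1 ρ)
    (hρ0 : ∀ a, 0 ≤ ρ a) {Z : Set ℝ} (hZ : Z.Countable)
    (hρZ : ∀ z ∈ Z, 0 < ρ z) (hGc : ∀ y : ι → ℝ, (∀ i, y i ∉ Z) → ContinuousAt G y) :
    Continuous (slideAverage G ρ) := by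
  refine continuous_iff_continuousAt.2 fun x₀ => ?_
  have hbad : {t : ℝ | ∃ i, slide ρ t x₀ i ∈ Z}.Countable := by
    rw [ofPred_exists]
    refine countable_iUnion fun i => ?_
    rcases eq_or_ne (ρ (x₀ i)) 0 with h0 | h0
    · have hx₀ : x₀ i ∉ Z := fun hz => (hρZ _ hz).ne' h0
      simp [slide, h0, hx₀]
    · exact hZ.preimage fun t t' htt' => by simpa [slide, h0] using htt'
  apply intervalIntegral.continuousAt_of_dominated_interval
    (bound := fun _ => max |G (slide ρ 0 (x₀ - 1))| |G (slide ρ 1 (x₀ + 1))|)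
  · exact Eventually.of_forall fun x =>
      (hG.comp (monotone_slide_left hρ0 x)).measurable.aestronglyMeasurable
  · filter_upwards [pi_Icc_mem_nhds (a := x₀ - 1) (b := x₀ + 1) (fun i => by simp)
      (fun i => by simp)] with x hx
    refine Eventually.of_forall fun t ht => ?_
    rw [uIoc_of_le zero_le_one] at ht
    exact abs_le_max_abs_abs (hG (slide_le_slide hρ hρ0 le_rfl ht.1.le ht.2 hx.1))
      (hG (slide_le_slide hρ hρ0 ht.1.le ht.2 le_rfl hx.2))
  · exact intervalIntegrable_const
  · filter_upwards [hbad.ae_notMem volume] with t ht _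
    exact (hGc _ fun i hi => ht ⟨i, hi⟩).comp (continuous_slide hρ.continuous t).continuousAt

end slide

theorem continuous_monotone_extension (n : ℕ) (W : Set ℝ)
    (hW : W.WellFoundedOn (· < ·))
    (hWlim : ∀ p : ℝ, p ∈ closure (W \ {p}) → p ∉ W)
    (g₀ : (Fin n → ℝ) → ℝ)
    (hmono : ∀ x y : Fin n → ℝ, (∀ i, x i ∈ W) → (∀ i, y i ∈ W) →
      x ≤ y → g₀ x ≤ g₀ y)
    (hbdd : ∀ B : Set (Fin n → ℝ), Bornology.IsBounded B →
      ∃ C : ℝ, ∀ x ∈ B, (∀ i, x i ∈ W) → |g₀ x| ≤ C) :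
    ∃ g : (Fin n → ℝ) → ℝ, Continuous g ∧ Monotone g ∧
      ∀ x : Fin n → ℝ, (∀ i, x i ∈ W) → g x = g₀ x := by
  have hWf : W.IsWF := hW
  have hmonoP : MonotoneOn g₀ (univ.pi fun _ => W) := fun x hx y hy =>
    hmono x y (fun i => hx i (mem_univ i)) (fun i => hy i (mem_univ i))
  have hc : ∀ v ∈ univ.pi (fun _ => W), g₀ (fun _ => sInf W) ≤ g₀ v := fun v hv =>
    hmonoP (hWf.isLeast_pi_csInf ⟨v, hv⟩).1 hv ((hWf.isLeast_pi_csInf ⟨v, hv⟩).2 hv)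
  have hbddP := bddAbove_image_pi_inter_Iic hWf hbdd
  have hWiso : ∀ w ∈ W, w ∉ closure (W \ {w}) := fun w hw h => hWlim w h hw
  refine ⟨slideAverage (supBelow (univ.pi fun _ => W) g₀ (g₀ fun _ => sInf W)) (sepRadius W),
    continuous_slideAverage (monotone_supBelow hbddP) lipschitzWith_sepRadius sepRadius_nonneg
      (.of_forall_notMem_closure_diff hWiso) (fun w hw => sepRadius_pos (hWiso w hw))
      (fun y hy => continuousAt_supBelow_pi hWf hbddP hy),
    monotone_slideAverage (monotone_supBelow hbddP) lipschitzWith_sepRadius sepRadius_nonneg,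
    fun w hw => slideAverage_eq fun t ht => supBelow_eq hmonoP hc ⟨⟨fun i _ => hw i, ?_⟩, ?_⟩⟩
  · exact fun i => le_add_of_nonneg_right (mul_nonneg ht.1 (sepRadius_nonneg _))
  · exact fun v hv i => le_of_le_add_mul_sepRadius (hw i) (hv.1 i (mem_univ i)) ht.2 (hv.2 i)
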